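/- arXiv:2409.20535 — 4 statements merged into one kernel-verified Lean document; each statement's English description precedes it below -/
import Mathlib

section
/- For any cycle C of length n and integers a, b, c with a + b + c = n and 0 ≤ a ≤ b ≤ c ≤ ⌊n/2⌋, there exists a proper vertex coloring of C with three colors such that the color classes have sizes exactly a, b, and c. -/
/-- `g` copies of `[0,2]`. -/
def r02 : ℕ → List (Fin 3)
  | 0 => []
  | g+1 => 0 :: 2 :: r02 g

/-- `d` copies of `[1,2,0]`. -/
def r120 : ℕ → List (Fin 3)
  | 0 => []
  | d+1 => 1 :: 2 :: 0 :: r120 d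

/-- `e` copies of `[1,2]`. -/
def r12 : ℕ → List (Fin 3)
  | 0 => []
  | e+1 => 1 :: 2 :: r12 e

def pat (g d e : ℕ) : List (Fin 3) := r02 g ++ r120 d ++ r12 e

lemma r02_length (g : ℕ) : (r02 g).length = 2 * g := by
  induction g with
  | zero => simp [r02]
  | succ g ih => simp [r02, ih]; omega

lemma r120_length (d : ℕ) : (r120 d).length = 3 * d := by
  induction d with
  | zero => simp [r120]
  | succ d ih => simp [r120, ih]; omega

lemma r12_length (e : ℕ) : (r12 e).length = 2 * e := by
  induction e with
  | zero => simp [r12]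
  | succ e ih => simp [r12, ih]; omega

lemma pat_length (g d e : ℕ) : (pat g d e).length = 2 * g + 3 * d + 2 * e := by
  simp [pat, r02_length, r120_length, r12_length]; omega

lemma mem_head?_append {α : Type*} {l l' : List α} {x : α}
    (h : x ∈ (l ++ l').head?) : x ∈ l.head? ∨ x ∈ l'.head? := by
  rw [List.head?_append] at h
  rcases l with _ | ⟨a, l⟩
  · exact Or.inr h
  · exact Or.inl h

lemma r02_count (g : ℕ) (j : Fin 3) :
    (r02 g).count j = if j = 1 then 0 else g := by
  induction g with
  | zero => simp [r02]
  | succ g ih =>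
    simp only [r02, List.count_cons, ih]
    fin_cases j <;> simp
lemma r120_count (d : ℕ) (j : Fin 3) : (r120 d).count j = d := by
  induction d with
  | zero => simp [r120]
  | succ d ih =>
    simp only [r120, List.count_cons, ih]
    fin_cases j <;> simp

lemma r12_count (e : ℕ) (j : Fin 3) :
    (r12 e).count j = if j = 0 then 0 else e := by
  induction e with
  | zero => simp [r12]
  | succ e ih =>
    simp only [r12, List.count_cons, ih]
    fin_cases j <;> simp

lemma pat_count (g d e : ℕ) (j : Fin 3) :
    (pat g d e).count j =
      if j = 0 then g + d else if j = 1 then d + e else g + d + e := by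
  simp only [pat, List.count_append, r02_count, r120_count, r12_count]
  fin_cases j <;> simp

lemma chain_r02 : ∀ g, List.Chain' (· ≠ ·) ((2 : Fin 3) :: r02 g)
  | 0 => by simp [r02, List.Chain']
  | g+1 => by
    rw [r02]
    exact List.isChain_cons_cons.2 ⟨by decide, List.isChain_cons_cons.2 ⟨by decide, chain_r02 g⟩⟩

lemma chain_r120 : ∀ d, List.Chain' (· ≠ ·) ((0 : Fin 3) :: r120 d)
  | 0 => by simp [r120, List.Chain']
  | d+1 => by
    rw [r120]
    exact List.isChain_cons_cons.2 ⟨by decide, List.isChain_cons_cons.2 ⟨by decide,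
      List.isChain_cons_cons.2 ⟨by decide, chain_r120 d⟩⟩⟩

lemma chain_r12 : ∀ e, List.Chain' (· ≠ ·) ((2 : Fin 3) :: r12 e)
  | 0 => by simp [r12, List.Chain']
  | e+1 => by
    rw [r12]
    exact List.isChain_cons_cons.2 ⟨by decide, List.isChain_cons_cons.2 ⟨by decide, chain_r12 e⟩⟩

lemma r02_head {g : ℕ} {x : Fin 3} (h : x ∈ (r02 g).head?) : x = 0 := by
  cases g <;> simp [r02] at h; exact h.symm

lemma r120_head {d : ℕ} {x : Fin 3} (h : x ∈ (r120 d).head?) : x = 1 := by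
  cases d <;> simp [r120] at h; exact h.symm

lemma r12_head {e : ℕ} {x : Fin 3} (h : x ∈ (r12 e).head?) : x = 1 := by
  cases e <;> simp [r12] at h; exact h.symm

lemma r02_last : ∀ {g : ℕ} {x : Fin 3}, x ∈ (r02 g).getLast? → x = 2
  | 0, x, h => by simp [r02] at h
  | 1, x, h => by simp [r02] at h; exact h.symm
  | g+2, x, h => by
    have : r02 (g+2) = 0 :: 2 :: r02 (g+1) := rfl
    rw [this, List.getLast?_cons_cons] at h
    exact r02_last (g := g+1) (by
      have : (2 : Fin 3) :: r02 (g+1) = 2 :: 0 :: 2 :: r02 g := rfl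
      rw [this, List.getLast?_cons_cons] at h
      exact h)

lemma r120_last : ∀ {d : ℕ} {x : Fin 3}, x ∈ (r120 d).getLast? → x = 0
  | 0, x, h => by simp [r120] at h
  | 1, x, h => by simp [r120] at h; exact h.symm
  | d+2, x, h => by
    have h2 : r120 (d+2) = 1 :: 2 :: 0 :: 1 :: (r120 (d+1)).tail := rfl
    rw [h2, List.getLast?_cons_cons, List.getLast?_cons_cons,
      List.getLast?_cons_cons] at h
    exact r120_last (d := d+1) h

lemma r12_last : ∀ {e : ℕ} {x : Fin 3}, x ∈ (r12 e).getLast? → x = 2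
  | 0, x, h => by simp [r12] at h
  | 1, x, h => by simp [r12] at h; exact h.symm
  | e+2, x, h => by
    have h2 : r12 (e+2) = 1 :: 2 :: 1 :: (r12 (e+1)).tail := rfl
    rw [h2, List.getLast?_cons_cons, List.getLast?_cons_cons] at h
    exact r12_last (e := e+1) h

lemma chain_pat (g d e : ℕ) : List.Chain' (· ≠ ·) (pat g d e) := by
  rw [pat, List.append_assoc, List.Chain', List.isChain_append]
  refine ⟨List.IsChain.tail (chain_r02 g), ?_, ?_⟩
  · rw [List.isChain_append]
    refine ⟨List.IsChain.tail (chain_r120 d), List.IsChain.tail (chain_r12 e), ?_⟩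
    intro x hx y hy
    rw [r120_last hx, r12_head hy]; decide
  · intro x hx y hy
    rw [r02_last hx]
    rcases mem_head?_append hy with hy' | hy'
    · rw [r120_head hy']; decide
    · rw [r12_head hy']; decide

lemma pat_head {g d e : ℕ} {x : Fin 3} (h : x ∈ (pat g d e).head?) :
    x = 0 ∨ x = 1 := by
  rw [pat, List.append_assoc] at h
  rcases mem_head?_append h with h' | h'
  · exact Or.inl (r02_head h')
  · rcases mem_head?_append h' with h'' | h''
    · exact Or.inr (r120_head h'')
    · exact Or.inr (r12_head h'')

lemma wrap_pat {g d e : ℕ} (hde : 1 ≤ d + e) (hge : e = 0 → g = 0)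
    {x y : Fin 3} (hx : x ∈ (pat g d e).getLast?) (hy : y ∈ (pat g d e).head?) :
    x ≠ y := by
  rcases Nat.eq_zero_or_pos e with he | he
  · -- then g = 0, d ≥ 1, pat = r120 d, last = 0, head = 1
    subst he
    have hg := hge rfl
    subst hg
    simp only [pat, r12, r02, List.nil_append, List.append_nil] at hx hy
    rw [r120_last hx, r120_head hy]; decide
  · -- e > 0, last = 2, head ∈ {0, 1}
    obtain ⟨e', rfl⟩ : ∃ e', e = e' + 1 := ⟨e - 1, by omega⟩
    rw [pat, List.getLast?_append_of_ne_nil _ (by simp [r12])] at hx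
    rw [r12_last hx]
    rcases pat_head hy with h | h <;> rw [h] <;> decide

/-- From a chain with matching endpoints, get the cyclic adjacency property. -/
lemma cyclic_get {L : List (Fin 3)} (hc : List.Chain' (· ≠ ·) L)
    (hw : ∀ x ∈ L.getLast?, ∀ y ∈ L.head?, x ≠ y)
    (k : ℕ) (hk : k < L.length) (hk2 : (k + 1) % L.length < L.length) :
    L[k] ≠ L[(k + 1) % L.length] := by
  rcases lt_or_ge (k + 1) L.length with h | h
  · have h2 : (k + 1) % L.length = k + 1 := Nat.mod_eq_of_lt h
    simp only [h2]
    have := List.isChain_iff_getElem.1 hc k (by omega)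
    simpa using this
  · have hk1 : k + 1 = L.length := by omega
    have h2 : (k + 1) % L.length = 0 := by rw [hk1, Nat.mod_self]
    simp only [h2]
    apply hw
    · rw [List.getLast?_eq_getElem?, show L.length - 1 = k by omega]
      simp
    · rw [List.head?_eq_getElem?]
      simp

/-- For any cycle of length `n` (vertex set `ZMod n`, edges `{i, i+1}`) and integers
`a ≤ b ≤ c ≤ ⌊n/2⌋` with `a + b + c = n`, there is a proper 3-coloring whose color
classes have sizes exactly `a`, `b`, `c`. -/
theorem stmt_0 (n : ℕ) [NeZero n] (hn : 3 ≤ n) (a b c : ℕ)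
    (hab : a ≤ b) (hbc : b ≤ c) (hc : c ≤ n / 2) (hsum : a + b + c = n) :
    ∃ f : ZMod n → Fin 3, (∀ i : ZMod n, f i ≠ f (i + 1)) ∧
      (Finset.univ.filter fun i => f i = 0).card = a ∧
      (Finset.univ.filter fun i => f i = 1).card = b ∧
      (Finset.univ.filter fun i => f i = 2).card = c := by
  have habc : c ≤ a + b := by omega
  set g := c - b with hg
  set d := a + b - c with hd
  set e := c - a with he
  have hlen : (pat g d e).length = n := by rw [pat_length]; omega
  have hb1 : 1 ≤ b := by omega
  set L := pat g d e with hL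
  set v : List.Vector (Fin 3) n := ⟨L, hlen⟩ with hv
  set f : ZMod n → Fin 3 := fun i => v.get ⟨i.val, ZMod.val_lt i⟩ with hf
  have key : ∀ j : Fin 3,
      (Finset.univ.filter fun i => f i = j).card = L.count j := by
    intro j
    have heq : (Finset.univ.filter fun i : ZMod n => f i = j).card =
        (Finset.univ.filter fun k : Fin n => v.get k = j).card := by
      apply Finset.card_equiv
        ⟨fun i => ⟨i.val, ZMod.val_lt i⟩, fun k => (k.val : ZMod n),
          fun i => ZMod.natCast_rightInverse i,
          fun k => Fin.ext (ZMod.val_cast_of_lt k.isLt)⟩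
      intro i
      simp [hf]
    rw [heq]
    exact Fin.card_filter_univ_eq_vector_get_eq_count j v
  refine ⟨f, ?_, ?_, ?_, ?_⟩
  · intro i
    have h1 : (1 : ZMod n).val = 1 := ZMod.val_one'' (by omega)
    have hadd : (i + 1).val = (i.val + 1) % n := by
      rw [ZMod.val_add, h1]
    have hvlt : i.val < L.length := hlen ▸ ZMod.val_lt i
    have hvlt2 : (i.val + 1) % L.length < L.length := Nat.mod_lt _ (by omega)
    have key2 := cyclic_get (chain_pat g d e)
      (fun x hx y hy => wrap_pat (by omega) (by omega) hx hy)
      i.val hvlt hvlt2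
    have hidx : (i + 1).val = (i.val + 1) % L.length := by rw [hadd, hlen]
    have hvlt3 : (i + 1).val < L.length := by rw [hlen]; exact ZMod.val_lt (i + 1)
    show L[i.val]'hvlt ≠ L[(i + 1).val]'hvlt3
    simp only [hidx]
    exact key2
  · rw [key 0, hL, pat_count]; simp; omega
  · rw [key 1, hL, pat_count]; simp; omega
  · rw [key 2, hL, pat_count]; simp; omega
end

section
/- If an n-cycle admits a proper 3-coloring with color class sizes (x_i, x_j, x_h) where x_j ≥ x_i + 1, then it also admits a proper 3-coloring with color class sizes (x_i + 1, x_j − 1, x_h). -/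
open Finset

private lemma card_evens' (m : ℕ) : ((range m).filter fun k => k % 2 = 0).card = (m+1)/2 := by
  induction m with
  | zero => simp
  | succ m ih =>
    rw [Finset.range_add_one, Finset.filter_insert]
    by_cases h : m % 2 = 0
    · rw [if_pos h, Finset.card_insert_of_notMem (by simp)]
      omega
    · rw [if_neg h]; omega

private lemma card_odds' (m : ℕ) : ((range m).filter fun k => k % 2 = 1).card = m/2 := by
  induction m with
  | zero => simp
  | succ m ih =>
    rw [Finset.range_add_one, Finset.filter_insert]
    by_cases h : m % 2 = 1
    · rw [if_pos h, Finset.card_insert_of_notMem (by simp)]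
      omega
    · rw [if_neg h]; omega

private lemma card_par_ge' (n B r : ℕ) (hB : B ≤ n) :
    ((range n).filter fun k => k % 2 = r ∧ B ≤ k).card
      = ((range n).filter fun k => k % 2 = r).card - ((range B).filter fun k => k % 2 = r).card := by
  have h := Finset.card_filter_add_card_filter_not
    (s := (range n).filter fun k => k % 2 = r) (p := fun k => B ≤ k)
  have e1 : ((range n).filter fun k => k % 2 = r).filter (fun k => B ≤ k)
      = (range n).filter fun k => k % 2 = r ∧ B ≤ k := by
    rw [Finset.filter_filter]
  have e2 : ((range n).filter fun k => k % 2 = r).filter (fun k => ¬ B ≤ k)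
      = (range B).filter fun k => k % 2 = r := by
    rw [Finset.filter_filter]
    ext k
    simp only [Finset.mem_filter, Finset.mem_range]
    omega
  rw [e1, e2] at h
  omega

private lemma card_par_lt' (n B r : ℕ) (hB : B ≤ n) :
    ((range n).filter fun k => k % 2 = r ∧ k < B).card
      = ((range B).filter fun k => k % 2 = r).card := by
  congr 1
  ext k
  simp only [Finset.mem_filter, Finset.mem_range]
  omega

private lemma card_val' (n : ℕ) [NeZero n] (p : ℕ → Prop) [DecidablePred p] :
    (Finset.univ.filter fun i : ZMod n => p i.val).card = ((Finset.range n).filter p).card := by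
  apply Finset.card_bij (fun i _ => i.val)
  · intro i hi
    simp only [Finset.mem_filter, Finset.mem_range] at *
    exact ⟨ZMod.val_lt i, hi.2⟩
  · intro i hi j hj h
    exact ZMod.val_injective n h
  · intro k hk
    simp only [Finset.mem_filter, Finset.mem_range] at hk
    exact ⟨(k : ZMod n), by simp [Finset.mem_filter, ZMod.val_cast_of_lt hk.1, hk.2],
      by simp [ZMod.val_cast_of_lt hk.1]⟩

private lemma indep_bound' (n : ℕ) [NeZero n] (F : ZMod n → Fin 3)
    (hF : ∀ i, F i ≠ F (i+1)) (v : Fin 3) :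
    2 * (Finset.univ.filter fun i => F i = v).card ≤ n := by
  set S := Finset.univ.filter fun i => F i = v with hS
  have himg : (S.image (· + 1)).card = S.card :=
    Finset.card_image_of_injective _ (add_left_injective 1)
  have hsub : S.image (· + 1) ⊆ Finset.univ.filter fun i => ¬ F i = v := by
    intro j hj
    simp only [Finset.mem_image, hS, Finset.mem_filter, Finset.mem_univ, true_and] at hj ⊢
    obtain ⟨i, hi, rfl⟩ := hj
    intro h; exact hF i (hi.trans h.symm)
  have h1 := Finset.card_le_card hsub
  have h2 := Finset.card_filter_add_card_filter_not
    (s := (Finset.univ : Finset (ZMod n))) (p := fun i => F i = v)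
  rw [← hS] at h2
  have h3 : (Finset.univ : Finset (ZMod n)).card = n := by
    rw [Finset.card_univ, ZMod.card]
  omega

private lemma partition3' (n : ℕ) [NeZero n] (F : ZMod n → Fin 3) :
    (Finset.univ.filter fun i => F i = 0).card + (Finset.univ.filter fun i => F i = 1).card
      + (Finset.univ.filter fun i => F i = 2).card = n := by
  have h3 : (Finset.univ : Finset (ZMod n)).card = n := by
    rw [Finset.card_univ, ZMod.card]
  have h2 := Finset.card_filter_add_card_filter_not
    (s := (Finset.univ : Finset (ZMod n))) (p := fun i => F i = 0)
  have h4 := Finset.card_filter_add_card_filter_not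
    (s := (Finset.univ.filter fun i => ¬ F i = 0)) (p := fun i => F i = 1)
  have e1 : Finset.filter (fun i => F i = 1) (Finset.univ.filter fun i => ¬ F i = 0)
      = Finset.univ.filter fun i => F i = 1 := by
    rw [Finset.filter_filter]
    apply Finset.filter_congr
    intro i _
    constructor
    · rintro ⟨_, h⟩; exact h
    · intro h; exact ⟨by rw [h]; decide, h⟩
  have e2 : Finset.filter (fun i => ¬ F i = 1) (Finset.univ.filter fun i => ¬ F i = 0)
      = Finset.univ.filter fun i => F i = 2 := by
    rw [Finset.filter_filter]
    apply Finset.filter_congr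
    intro i _
    have : ∀ w : Fin 3, (¬ w = 0 ∧ ¬ w = 1) ↔ w = 2 := by decide
    exact this (F i)
  rw [e1, e2] at h4
  omega

private def pat1' (n x y k : ℕ) : Fin 3 :=
  if k % 2 = 0 then (if k < 2*x then 0 else 2)
  else (if 2*(n/2) - 2*y ≤ k then 1 else 2)

private def pat2' (x k : ℕ) : Fin 3 :=
  if k % 2 = 1 then 2 else (if k < 2*x then 0 else 1)

private lemma pat1'_eq_zero (n x y k : ℕ) : pat1' n x y k = 0 ↔ (k % 2 = 0 ∧ k < 2*x) := by
  unfold pat1'; split_ifs <;> simp_all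

private lemma pat1'_eq_one (n x y k : ℕ) :
    pat1' n x y k = 1 ↔ (k % 2 = 1 ∧ 2*(n/2) - 2*y ≤ k) := by
  unfold pat1'; split_ifs <;> simp_all <;> omega

private lemma pat2'_eq_zero (x k : ℕ) : pat2' x k = 0 ↔ (k % 2 = 0 ∧ k < 2*x) := by
  unfold pat2'; split_ifs <;> simp_all <;> omega

private lemma pat2'_eq_one (x k : ℕ) : pat2' x k = 1 ↔ (k % 2 = 0 ∧ ¬ k < 2*x) := by
  unfold pat2'; split_ifs <;> simp_all <;> omega

private lemma pat1'_proper (n x y z : ℕ) (hn : 3 ≤ n) (hsum : x+y+z=n) (hx : 1≤x) (hy : 1≤y)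
    (hz : 1≤z) (h2x : 2*x≤n) (h2y : 2*y≤n) (h2z : 2*z≤n) (hcase : n%2=1 ∨ 2*z<n) :
    (∀ k, k+1 < n → pat1' n x y k ≠ pat1' n x y (k+1)) ∧ pat1' n x y (n-1) ≠ pat1' n x y 0 := by
  constructor
  · intro k hk
    unfold pat1'
    split_ifs <;> first | decide | (exfalso; first | assumption | omega)
  · unfold pat1'
    split_ifs <;> first | decide | (exfalso; first | assumption | omega)

private lemma pat2'_proper (n x : ℕ) (hn : 3 ≤ n) (heven : n % 2 = 0) :
    (∀ k, k+1 < n → pat2' x k ≠ pat2' x (k+1)) ∧ pat2' x (n-1) ≠ pat2' x 0 := by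
  constructor
  · intro k hk
    unfold pat2'
    split_ifs <;> first | decide | (exfalso; first | assumption | omega)
  · unfold pat2'
    split_ifs <;> first | decide | (exfalso; first | assumption | omega)

private lemma val_succ' (n : ℕ) [NeZero n] (hn : 3 ≤ n) (i : ZMod n) :
    (i + 1).val = if i.val = n - 1 then 0 else i.val + 1 := by
  have h1 : (1 : ZMod n).val = 1 := ZMod.val_one_eq_one_mod n ▸ Nat.mod_eq_of_lt (by omega)
  have h2 : (i + 1).val = (i.val + (1 : ZMod n).val) % n := ZMod.val_add i 1
  have h3 : i.val < n := ZMod.val_lt i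
  rw [h1] at h2
  split_ifs with h
  · rw [h2, h]
    have : n - 1 + 1 = n := by omega
    rw [this, Nat.mod_self]
  · rw [h2, Nat.mod_eq_of_lt (by omega)]

private lemma proper_of_pat (n : ℕ) [NeZero n] (hn : 3 ≤ n) (p : ℕ → Fin 3)
    (h1 : ∀ k, k+1 < n → p k ≠ p (k+1)) (h2 : p (n-1) ≠ p 0) :
    ∀ i : ZMod n, p i.val ≠ p (i+1).val := by
  intro i
  rw [val_succ' n hn i]
  split_ifs with h
  · rw [h]; exact h2
  · exact h1 i.val (by have := ZMod.val_lt i; omega)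

private lemma realize' (n x y z : ℕ) [NeZero n] (hn : 3 ≤ n) (hsum : x+y+z = n)
    (hx : 1 ≤ x) (hy : 1 ≤ y) (hz : 1 ≤ z) (h2x : 2*x ≤ n) (h2y : 2*y ≤ n) (h2z : 2*z ≤ n) :
    ∃ g : ZMod n → Fin 3, (∀ i : ZMod n, g i ≠ g (i + 1)) ∧
      (Finset.univ.filter fun i => g i = 0).card = x ∧
      (Finset.univ.filter fun i => g i = 1).card = y ∧
      (Finset.univ.filter fun i => g i = 2).card = z := by
  by_cases hcase : n % 2 = 1 ∨ 2*z < n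
  · -- general pattern
    have h0 : (Finset.univ.filter fun i : ZMod n => pat1' n x y i.val = 0).card = x := by
      have e : (Finset.univ.filter fun i : ZMod n => pat1' n x y i.val = 0)
          = Finset.univ.filter fun i : ZMod n => (i.val % 2 = 0 ∧ i.val < 2*x) := by
        apply Finset.filter_congr; intro i _; exact pat1'_eq_zero n x y i.val
      rw [e, card_val' n (fun k => k % 2 = 0 ∧ k < 2*x), card_par_lt' n (2*x) 0 h2x,
        card_evens']
      omega
    have h1 : (Finset.univ.filter fun i : ZMod n => pat1' n x y i.val = 1).card = y := by
      have e : (Finset.univ.filter fun i : ZMod n => pat1' n x y i.val = 1)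
          = Finset.univ.filter fun i : ZMod n =>
              (i.val % 2 = 1 ∧ 2*(n/2) - 2*y ≤ i.val) := by
        apply Finset.filter_congr; intro i _; exact pat1'_eq_one n x y i.val
      rw [e, card_val' n (fun k => k % 2 = 1 ∧ 2*(n/2) - 2*y ≤ k),
        card_par_ge' n (2*(n/2) - 2*y) 1 (by omega), card_odds', card_odds']
      omega
    have hp := partition3' n (fun i => pat1' n x y i.val)
    beta_reduce at hp
    refine ⟨fun i => pat1' n x y i.val,
      proper_of_pat n hn _ (pat1'_proper n x y z hn hsum hx hy hz h2x h2y h2z hcase).1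
        (pat1'_proper n x y z hn hsum hx hy hz h2x h2y h2z hcase).2, h0, h1, by
          show (Finset.univ.filter fun i : ZMod n => pat1' n x y i.val = 2).card = z
          omega⟩
  · -- special pattern
    push_neg at hcase
    obtain ⟨hodd, hzz⟩ := hcase
    have heven : n % 2 = 0 := by omega
    have hzn : 2*z = n := by omega
    have h0 : (Finset.univ.filter fun i : ZMod n => pat2' x i.val = 0).card = x := by
      have e : (Finset.univ.filter fun i : ZMod n => pat2' x i.val = 0)
          = Finset.univ.filter fun i : ZMod n => (i.val % 2 = 0 ∧ i.val < 2*x) := by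
        apply Finset.filter_congr; intro i _; exact pat2'_eq_zero x i.val
      rw [e, card_val' n (fun k => k % 2 = 0 ∧ k < 2*x), card_par_lt' n (2*x) 0 h2x,
        card_evens']
      omega
    have h1 : (Finset.univ.filter fun i : ZMod n => pat2' x i.val = 1).card = y := by
      have e : (Finset.univ.filter fun i : ZMod n => pat2' x i.val = 1)
          = Finset.univ.filter fun i : ZMod n => (i.val % 2 = 0 ∧ 2*x ≤ i.val) := by
        apply Finset.filter_congr
        intro i _
        rw [pat2'_eq_one x i.val]
        constructor
        · rintro ⟨h1, h2⟩; exact ⟨h1, by omega⟩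
        · rintro ⟨h1, h2⟩; exact ⟨h1, by omega⟩
      rw [e, card_val' n (fun k => k % 2 = 0 ∧ 2*x ≤ k), card_par_ge' n (2*x) 0 h2x,
        card_evens', card_evens']
      omega
    have hp := partition3' n (fun i => pat2' x i.val)
    beta_reduce at hp
    exact ⟨fun i => pat2' x i.val,
      proper_of_pat n hn _ (pat2'_proper n x hn heven).1 (pat2'_proper n x hn heven).2,
      h0, h1, by
        show (Finset.univ.filter fun i : ZMod n => pat2' x i.val = 2).card = z
        omega⟩

/-- If an `n`-cycle admits a proper 3-coloring with color class sizes `(a, b, c)` where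
`b ≥ a + 1`, then it also admits a proper 3-coloring with class sizes `(a+1, b-1, c)`. -/
theorem stmt_1 (n : ℕ) [NeZero n] (hn : 3 ≤ n) (a b c : ℕ) (hb : a + 1 ≤ b)
    (f : ZMod n → Fin 3) (hf : ∀ i : ZMod n, f i ≠ f (i + 1))
    (ha : (Finset.univ.filter fun i => f i = 0).card = a)
    (hbb : (Finset.univ.filter fun i => f i = 1).card = b)
    (hc : (Finset.univ.filter fun i => f i = 2).card = c) :
    ∃ g : ZMod n → Fin 3, (∀ i : ZMod n, g i ≠ g (i + 1)) ∧
      (Finset.univ.filter fun i => g i = 0).card = a + 1 ∧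
      (Finset.univ.filter fun i => g i = 1).card = b - 1 ∧
      (Finset.univ.filter fun i => g i = 2).card = c := by
  have hsum : a + b + c = n := by
    have := partition3' n f
    rw [ha, hbb, hc] at this
    exact this
  have hib := indep_bound' n f hf 1
  have hic := indep_bound' n f hf 2
  rw [hbb] at hib
  rw [hc] at hic
  have hres := realize' n (a+1) (b-1) c hn (by omega) (by omega) (by omega) (by omega)
    (by omega) (by omega) (by omega)
  exact hres
end

section
/- Let F be a graph consisting of r vertex-disjoint cycles of lengths n_1, ..., n_r with n_1 + ... + n_r = n, and let k be the number of odd cycles among them. If H is the complete tripartite graph on n vertices with parts V_1, V_2, V_3 and minimum degree at least n/2 + k/2, then H contains F as a subgraph. -/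
open Finset

section StmtAux

lemma coloring (m a b c : ℕ) [NeZero m] (u v w : Fin 3) (huv : u ≠ v) (huw : u ≠ w) (hvw : v ≠ w)
    (hm : 3 ≤ m) (hsum : a + b + c = m) (hab : b ≤ a) (hac : c ≤ a) (ha : 2 * a ≤ m) :
    ∃ f : ZMod m → Fin 3, (∀ x, f x ≠ f (x + 1)) ∧
      (univ.filter fun x => f x = u).card = a ∧
      (univ.filter fun x => f x = v).card = b ∧
      (univ.filter fun x => f x = w).card = c := by
  haveI : Fact (1 < m) := ⟨by omega⟩
  set h : ℕ := (m+1)/2 with hh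
  set L : ℕ → Fin 3 := fun t => if t < a then u else if t < a + b then v else w with hL
  set idx : ZMod m → ℕ := fun x => if x.val % 2 = 0 then x.val / 2 else h + x.val / 2 with hidx
  have hvlt : ∀ x : ZMod m, x.val < m := fun x => ZMod.val_lt x
  have hidxlt : ∀ x : ZMod m, idx x < m := by
    intro x; have := hvlt x; simp only [hidx]; split_ifs <;> omega
  have hinj : Function.Injective idx := by
    intro x y hxy
    apply ZMod.val_injective
    have hx := hvlt x; have hy := hvlt y
    simp only [hidx] at hxy; split_ifs at hxy <;> omega
  refine ⟨fun x => L (idx x), ?_, ?_, ?_, ?_⟩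
  · intro x
    have hx := hvlt x
    have hx1 : (x + 1).val = if x.val + 1 = m then 0 else x.val + 1 := by
      rw [ZMod.val_add, ZMod.val_one]
      split_ifs with hc
      · rw [hc, Nat.mod_self]
      · exact Nat.mod_eq_of_lt (by omega)
    simp only [hL, hidx, hx1]
    split_ifs <;> first | exact huv | exact huw | exact hvw | exact huv.symm | exact huw.symm | exact hvw.symm | omega
  all_goals {
    beta_reduce
    have himg : univ.image idx = range m := by
      apply Finset.eq_of_subset_of_card_le
      · intro t ht; rw [Finset.mem_range]; obtain ⟨x, _, rfl⟩ := Finset.mem_image.1 ht; exact hidxlt x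
      · rw [Finset.card_range, Finset.card_image_of_injective _ hinj, Finset.card_univ, ZMod.card]
    have key : ∀ y : Fin 3,
        (univ.filter fun x => L (idx x) = y).card = ((range m).filter fun t => L t = y).card := by
      intro y
      rw [← himg]
      rw [← Finset.card_image_of_injective (univ.filter fun x => L (idx x) = y) hinj]
      congr 1
      ext t
      simp only [Finset.mem_image, Finset.mem_filter, Finset.mem_univ, true_and]
      constructor
      · rintro ⟨x, hPx, rfl⟩; exact ⟨⟨x, rfl⟩, hPx⟩
      · rintro ⟨⟨x, rfl⟩, hPx⟩; exact ⟨x, hPx, rfl⟩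
    first
    | (rw [key u]
       have : ((range m).filter fun t => L t = u) = range a := by
         ext t
         simp only [Finset.mem_filter, Finset.mem_range, hL]
         constructor
         · rintro ⟨htm, hLt⟩; by_contra hta; rw [if_neg hta] at hLt
           split_ifs at hLt <;> [exact huv hLt.symm; exact huw hLt.symm]
         · intro hta; exact ⟨by omega, by rw [if_pos hta]⟩
       rw [this, Finset.card_range])
    | (rw [key v]
       have : ((range m).filter fun t => L t = v) = Finset.Ico a (a+b) := by
         ext t
         simp only [Finset.mem_filter, Finset.mem_range, Finset.mem_Ico, hL]
         constructor
         · rintro ⟨htm, hLt⟩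
           split_ifs at hLt with h1 h2
           · exact absurd hLt.symm huv.symm
           · omega
           · exact absurd hLt.symm hvw
         · rintro ⟨h1, h2⟩; refine ⟨by omega, ?_⟩; rw [if_neg (by omega), if_pos h2]
       rw [this, Nat.card_Ico]; omega)
    | (rw [key w]
       have : ((range m).filter fun t => L t = w) = Finset.Ico (a+b) m := by
         ext t
         simp only [Finset.mem_filter, Finset.mem_range, Finset.mem_Ico, hL]
         constructor
         · rintro ⟨htm, hLt⟩
           split_ifs at hLt with h1 h2
           · exact absurd hLt.symm huw.symm
           · exact absurd hLt.symm hvw.symm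
           · omega
         · rintro ⟨h1, h2⟩; refine ⟨h2, ?_⟩; rw [if_neg (by omega), if_neg (by omega)]
       rw [this, Nat.card_Ico]; omega) }


lemma sandwich3 (S' q K' ε c0 c1 c2 : ℕ) (hε : ε ≤ 1) (hq : 1 ≤ q) (hK : K' ≤ S')
 (h0 : c0 ≤ S' + q) (h1 : c1 ≤ S' + q) (h2 : c2 ≤ S' + q)
 (hsum : c0 + c1 + c2 = 2*S' + 2*q + K' + ε) :
 ∃ e0 e1 e2, e0+e1+e2 = 2*q + ε ∧ e0 ≤ q ∧ e1 ≤ q ∧ e2 ≤ q ∧ e0 ≤ c0 ∧ e1 ≤ c1 ∧ e2 ≤ c2 ∧ c0 ≤ e0 + S' ∧ c1 ≤ e1 + S' ∧ c2 ≤ e2 + S' := by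
  obtain ⟨e0, l0, u0c, u0q, r1, r2⟩ : ∃ e0, c0 - S' ≤ e0 ∧ e0 ≤ c0 ∧ e0 ≤ q ∧
      (c1 - S') + (c2 - S') + e0 ≤ 2*q+ε ∧ 2*q+ε ≤ e0 + min c1 q + min c2 q :=
    ⟨max (c0 - S') (min (min c0 q) (2*q + ε - (c1 - S') - (c2 - S'))), by omega⟩
  obtain ⟨e1, l1, u1c, u1q, s1, s2⟩ : ∃ e1, c1 - S' ≤ e1 ∧ e1 ≤ c1 ∧ e1 ≤ q ∧
      (c2 - S') + e1 + e0 ≤ 2*q+ε ∧ 2*q+ε ≤ e0 + e1 + min c2 q :=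
    ⟨max (c1 - S') (min (min c1 q) (2*q+ε - e0 - (c2 - S'))), by omega⟩
  exact ⟨e0, e1, 2*q+ε - e0 - e1, by omega, by omega, by omega, by omega, by omega, by omega, by omega, by omega, by omega, by omega⟩

lemma sum_split {s : ℕ} (f : Fin s → ℕ) :
    ∑ i, f i = 2 * (∑ i, f i / 2) + ∑ i, (if Odd (f i) then 1 else 0) := by
  rw [Finset.mul_sum, ← Finset.sum_add_distrib]
  apply Finset.sum_congr rfl
  intro i _
  rcases Nat.even_or_odd (f i) with h | h
  · rw [if_neg (by simpa using h)]; obtain ⟨t, ht⟩ := h; omega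
  · rw [if_pos h]; obtain ⟨t, ht⟩ := h; omega


lemma fin3any : ∀ j : Fin 3, j = 0 ∨ j = 1 ∨ j = 2 := by decide

lemma distrib : ∀ (r : ℕ) (nl : Fin r → ℕ), (∀ i, 3 ≤ nl i) → ∀ (c : Fin 3 → ℕ),
    (c 0 + c 1 + c 2 = ∑ i, nl i) → (∀ j, c j ≤ ∑ i, nl i / 2) →
    ∃ d : Fin r → Fin 3 → ℕ, (∀ i, d i 0 + d i 1 + d i 2 = nl i) ∧ (∀ i j, 2 * d i j ≤ nl i) ∧
      (∀ j, ∑ i, d i j = c j) := by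
  intro r
  induction r with
  | zero =>
    intro nl _ c hsum _
    simp only [Finset.univ_eq_empty, Finset.sum_empty] at hsum ⊢
    exact ⟨fun i => i.elim0, fun i => i.elim0, fun i => i.elim0,
      fun j => by rcases fin3any j with rfl | rfl | rfl <;> omega⟩
  | succ r ih =>
    intro nl hl c hsum hcap
    have hm3 : 3 ≤ nl (Fin.last r) := hl _
    have hsplit : ∑ i : Fin (r+1), nl i = (∑ i : Fin r, nl i.castSucc) + nl (Fin.last r) :=
      Fin.sum_univ_castSucc nl
    have hsplit2 : ∑ i : Fin (r+1), nl i / 2 =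
        (∑ i : Fin r, nl i.castSucc / 2) + nl (Fin.last r) / 2 :=
      Fin.sum_univ_castSucc (fun i => nl i / 2)
    have hid : ∑ i : Fin (r+1), nl i = 2 * (∑ i : Fin (r+1), nl i / 2) +
        ∑ i : Fin (r+1), (if Odd (nl i) then 1 else 0) := sum_split nl
    have hid' : ∑ i : Fin r, nl i.castSucc = 2 * (∑ i : Fin r, nl i.castSucc / 2) +
        ∑ i : Fin r, (if Odd (nl i.castSucc) then 1 else 0) := sum_split _
    have hsplit3 : ∑ i : Fin (r+1), (if Odd (nl i) then 1 else 0) =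
        (∑ i : Fin r, if Odd (nl i.castSucc) then 1 else 0) +
        (if Odd (nl (Fin.last r)) then 1 else 0) :=
      Fin.sum_univ_castSucc (fun i => if Odd (nl i) then 1 else 0)
    have hKS : (∑ i : Fin r, if Odd (nl i.castSucc) then 1 else 0) ≤ ∑ i : Fin r, nl i.castSucc / 2 := by
      apply Finset.sum_le_sum
      intro i _
      have := hl i.castSucc
      split_ifs <;> omega
    have hε : (if Odd (nl (Fin.last r)) then 1 else 0) ≤ 1 := by split_ifs <;> omega
    have hεpar : (if Odd (nl (Fin.last r)) then 1 else 0) = nl (Fin.last r) % 2 := by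
      rcases Nat.even_or_odd (nl (Fin.last r)) with h | h
      · rw [if_neg (by simpa using h)]; obtain ⟨t, ht⟩ := h; omega
      · rw [if_pos h]; obtain ⟨t, ht⟩ := h; omega
    obtain ⟨e0, e1, e2, hesum, he0q, he1q, he2q, he0c, he1c, he2c, hc0, hc1, hc2⟩ :=
      sandwich3 (∑ i : Fin r, nl i.castSucc / 2) (nl (Fin.last r) / 2)
        (∑ i : Fin r, if Odd (nl i.castSucc) then 1 else 0)
        (if Odd (nl (Fin.last r)) then 1 else 0)
        (c 0) (c 1) (c 2) hε (by omega) hKS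
        (by have := hcap 0; omega) (by have := hcap 1; omega) (by have := hcap 2; omega)
        (by omega)
    obtain ⟨d', hd1, hd2, hd3⟩ := ih (fun i => nl i.castSucc) (fun i => hl _)
      ![c 0 - e0, c 1 - e1, c 2 - e2]
      (by simp; omega)
      (by intro j; rcases fin3any j with rfl | rfl | rfl <;> simp <;> omega)
    refine ⟨Fin.lastCases ![e0, e1, e2] d', ?_, ?_, ?_⟩
    · intro i
      refine Fin.lastCases ?_ ?_ i
      · simp only [Fin.lastCases_last]
        simp
        omega
      · intro i'
        simp only [Fin.lastCases_castSucc]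
        exact hd1 i'
    · intro i j
      refine Fin.lastCases ?_ ?_ i
      · simp only [Fin.lastCases_last]
        rcases fin3any j with rfl | rfl | rfl <;> simp <;> omega
      · intro i'
        simp only [Fin.lastCases_castSucc]
        exact hd2 i' j
    · intro j
      rw [Fin.sum_univ_castSucc]
      simp only [Fin.lastCases_castSucc, Fin.lastCases_last]
      have h3 := hd3 j
      rcases fin3any j with rfl | rfl | rfl <;> simp at h3 ⊢ <;> omega

lemma coloring' (m : ℕ) [NeZero m] (hm : 3 ≤ m) (dd : Fin 3 → ℕ)
    (hsum : dd 0 + dd 1 + dd 2 = m) (hbd : ∀ j, 2 * dd j ≤ m) :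
    ∃ f : ZMod m → Fin 3, (∀ x, f x ≠ f (x + 1)) ∧
      ∀ j, (univ.filter fun x => f x = j).card = dd j := by
  rcases le_total (dd 0) (dd 1) with h01 | h01
  · rcases le_total (dd 1) (dd 2) with h12 | h12
    · obtain ⟨f, hadj, hu, hv, hw⟩ := coloring m (dd 2) (dd 0) (dd 1) 2 0 1 (by decide) (by decide)
        (by decide) hm (by omega) (by omega) (by omega) (hbd 2)
      exact ⟨f, hadj, fun j => by fin_cases j <;> assumption⟩
    · obtain ⟨f, hadj, hu, hv, hw⟩ := coloring m (dd 1) (dd 0) (dd 2) 1 0 2 (by decide) (by decide)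
        (by decide) hm (by omega) (by omega) (by omega) (hbd 1)
      exact ⟨f, hadj, fun j => by fin_cases j <;> assumption⟩
  · rcases le_total (dd 0) (dd 2) with h02 | h02
    · obtain ⟨f, hadj, hu, hv, hw⟩ := coloring m (dd 2) (dd 0) (dd 1) 2 0 1 (by decide) (by decide)
        (by decide) hm (by omega) (by omega) (by omega) (hbd 2)
      exact ⟨f, hadj, fun j => by fin_cases j <;> assumption⟩
    · obtain ⟨f, hadj, hu, hv, hw⟩ := coloring m (dd 0) (dd 1) (dd 2) 0 1 2 (by decide) (by decide)
        (by decide) hm (by omega) (by omega) (by omega) (hbd 0)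
      exact ⟨f, hadj, fun j => by fin_cases j <;> assumption⟩


set_option maxHeartbeats 1000000 in
/-- Let `F` consist of `r` vertex-disjoint cycles of lengths `nl i ≥ 3` summing to `n`,
with `k` of the lengths odd. If `H` is the complete tripartite graph on `n` vertices
(part assignment `p`, adjacency `p u ≠ p v`) with minimum degree at least `n/2 + k/2`
(i.e. `n + k ≤ 2 · deg v` for all `v`), then `H` contains `F` as a subgraph. -/
theorem stmt_2 (n r : ℕ) (nl : Fin r → ℕ) (hl : ∀ i, 3 ≤ nl i)
    (hsum : ∑ i, nl i = n)
    (k : ℕ) (hk : k = (Finset.univ.filter fun i => Odd (nl i)).card)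
    (p : Fin n → Fin 3)
    (hdeg : ∀ v : Fin n, n + k ≤ 2 * (Finset.univ.filter fun u => p u ≠ p v).card) :
    ∃ g : (Σ i : Fin r, ZMod (nl i)) → Fin n, Function.Injective g ∧
      ∀ (i : Fin r) (x : ZMod (nl i)), p (g ⟨i, x⟩) ≠ p (g ⟨i, x + 1⟩) := by
  letI : ∀ i, NeZero (nl i) := fun i => ⟨by have := hl i; omega⟩
  set c : Fin 3 → ℕ := fun j => (univ.filter fun v => p v = j).card with hc
  have hcsum : c 0 + c 1 + c 2 = n := by
    have h1 : (univ : Finset (Fin n)).card = ∑ j : Fin 3, (univ.filter fun v => p v = j).card :=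
      Finset.card_eq_sum_card_fiberwise (fun v _ => Finset.mem_univ (p v))
    rw [Finset.card_univ, Fintype.card_fin, Fin.sum_univ_three] at h1
    simp only [hc]
    omega
  have hkk : k = ∑ i, (if Odd (nl i) then 1 else 0) := by rw [hk, Finset.card_filter]
  have hid : n = 2 * (∑ i, nl i / 2) + k := by rw [← hsum, hkk]; exact sum_split nl
  have hcap : ∀ j, c j ≤ ∑ i, nl i / 2 := by
    intro j
    by_cases hcj : c j = 0
    · omega
    · obtain ⟨v, hv⟩ := Finset.card_ne_zero.mp hcj
      rw [Finset.mem_filter] at hv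
      have hd := hdeg v
      simp only [ne_eq] at hd
      have hsp : (univ.filter fun u => p u = p v).card +
          (univ.filter fun u => ¬ p u = p v).card = n := by
        rw [Finset.card_filter_add_card_filter_not, Finset.card_univ, Fintype.card_fin]
      rw [hv.2] at hsp hd
      have hcjv : (univ.filter fun u => p u = j).card = c j := rfl
      omega
  obtain ⟨d, hd1, hd2, hd3⟩ := distrib r nl hl c (by rw [hsum]; exact hcsum) hcap
  have hex : ∀ i : Fin r, ∃ f : ZMod (nl i) → Fin 3, (∀ x, f x ≠ f (x + 1)) ∧
      ∀ j, (univ.filter fun x => f x = j).card = d i j :=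
    fun i => coloring' (nl i) (hl i) (d i) (hd1 i) (fun j => hd2 i j)
  choose f hadj hcnt using hex
  have hcards : ∀ j : Fin 3, Fintype.card {s : Σ i : Fin r, ZMod (nl i) // f s.1 s.2 = j} =
      Fintype.card {v : Fin n // p v = j} := by
    intro j
    have e1 : {s : Σ i : Fin r, ZMod (nl i) // f s.1 s.2 = j} ≃
        Σ i : Fin r, {x : ZMod (nl i) // f i x = j} :=
      { toFun := fun s => ⟨s.1.1, s.1.2, s.2⟩
        invFun := fun t => ⟨⟨t.1, t.2.1⟩, t.2.2⟩
        left_inv := fun s => rfl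
        right_inv := fun t => rfl }
    rw [Fintype.card_congr e1, Fintype.card_sigma]
    have h2 : ∀ i, Fintype.card {x : ZMod (nl i) // f i x = j} = d i j := by
      intro i; rw [Fintype.card_subtype]; exact hcnt i j
    rw [Finset.sum_congr rfl (fun i _ => h2 i), hd3 j, Fintype.card_subtype]
  obtain ⟨E, hE⟩ : ∃ E : (Σ i : Fin r, ZMod (nl i)) ≃ Fin n, ∀ s, p (E s) = f s.1 s.2 :=
    ⟨Equiv.ofFiberEquiv (f := fun s : Σ i : Fin r, ZMod (nl i) => f s.1 s.2) (g := p)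
      (fun j => Fintype.equivOfCardEq (hcards j)),
     fun s => Equiv.ofFiberEquiv_map _ s⟩
  refine ⟨E, E.injective, fun i x => ?_⟩
  rw [hE ⟨i, x⟩, hE ⟨i, x + 1⟩]
  exact hadj i x

end StmtAux
end

section
/- Let C be a 3-graph consisting of vertex-disjoint loose cycles C_{n_1}, ..., C_{n_r} with n_1 + ... + n_r = n, and let k be the number of these loose cycles with odd length. Then there exists a 3-graph H on n vertices with minimum codegree ⌊(n+2k)/4⌋ − 1 that does not contain C as a spanning subhypergraph. -/
/-- Each vertex of a loose cycle lies in at most 2 hyperedges, so a set of vertices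
meeting every hyperedge of a loose cycle with `ℓ` edges has at least `ℓ/2` elements. -/
lemma loose_cycle_cover (n N ℓ m : ℕ) [NeZero N] (hN : N = 2 * ℓ) (hℓ : 3 ≤ ℓ)
    (f : ZMod N → Fin n)
    (hedge : ∀ j < ℓ, ∃ v : ZMod N,
      (v = ((2 * j : ℕ) : ZMod N) ∨ v = ((2 * j + 1 : ℕ) : ZMod N) ∨
        v = ((2 * j + 2 : ℕ) : ZMod N)) ∧ ((f v : Fin n) : ℕ) < m) :
    ℓ ≤ 2 * (Finset.univ.filter (fun v : ZMod N => ((f v : Fin n) : ℕ) < m)).card := by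
  classical
  choose g hg1 hg2 using hedge
  set t : Finset (ZMod N) :=
    Finset.univ.filter (fun v : ZMod N => ((f v : Fin n) : ℕ) < m) with ht
  set c : ℕ → ZMod N := fun j => if h : j < ℓ then g j h else 0 with hc
  have hmaps : ∀ j ∈ Finset.range ℓ, c j ∈ t := by
    intro j hj
    rw [Finset.mem_range] at hj
    simp only [hc, dif_pos hj, ht, Finset.mem_filter, Finset.mem_univ, true_and]
    exact hg2 j hj
  have hfib : ∀ v ∈ t, ((Finset.range ℓ).filter (fun j => c j = v)).card ≤ 2 := by
    intro v _
    set a : ℕ := v.val with hav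
    have haN : a < N := ZMod.val_lt v
    set b1 : ℕ := if a % 2 = 1 then (a - 1) / 2 else a / 2 with hb1
    set b2 : ℕ := if a % 2 = 1 then (a - 1) / 2 else (if a = 0 then ℓ - 1 else a / 2 - 1)
      with hb2
    have hsub : (Finset.range ℓ).filter (fun j => c j = v) ⊆ {b1, b2} := by
      intro j hj
      rw [Finset.mem_filter, Finset.mem_range] at hj
      obtain ⟨hjℓ, hjv⟩ := hj
      rw [hc] at hjv
      simp only [dif_pos hjℓ] at hjv
      have hD : a = 2 * j ∨ a = 2 * j + 1 ∨ a = 2 * j + 2 ∨ (a = 0 ∧ j + 1 = ℓ) := by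
        rcases hg1 j hjℓ with h | h | h
        · left
          have : ((2 * j : ℕ) : ZMod N).val = (2 * j) % N := ZMod.val_natCast _ _
          rw [← hjv, h, this, Nat.mod_eq_of_lt (by omega)] at hav
          omega
        · right; left
          have : ((2 * j + 1 : ℕ) : ZMod N).val = (2 * j + 1) % N := ZMod.val_natCast _ _
          rw [← hjv, h, this, Nat.mod_eq_of_lt (by omega)] at hav
          omega
        · right; right
          have hval : ((2 * j + 2 : ℕ) : ZMod N).val = (2 * j + 2) % N :=
            ZMod.val_natCast _ _
          rw [← hjv, h, hval] at hav
          by_cases hlt : 2 * j + 2 < N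
          · rw [Nat.mod_eq_of_lt hlt] at hav; omega
          · have h2 : 2 * j + 2 = N := by omega
            rw [h2, Nat.mod_self] at hav
            omega
      simp only [Finset.mem_insert, Finset.mem_singleton, hb1, hb2]
      split_ifs <;> omega
    calc ((Finset.range ℓ).filter (fun j => c j = v)).card
        ≤ ({b1, b2} : Finset ℕ).card := Finset.card_le_card hsub
      _ ≤ 2 := by
          apply le_trans (Finset.card_insert_le _ _)
          simp
  have := Finset.card_le_mul_card_image_of_maps_to hmaps 2 hfib
  rwa [Finset.card_range] at this


lemma triple_card_eq_three {n : ℕ} (u v w : Fin n) (huv : u ≠ v) :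
    (({u, v, w} : Finset (Fin n)).card = 3 ↔ w ≠ u ∧ w ≠ v) := by
  have hvu : v ≠ u := huv.symm
  by_cases h1 : w = u <;> by_cases h2 : w = v <;>
    simp_all [Finset.card_insert_of_notMem, Finset.pair_comm, Finset.card_pair,
      Finset.card_pair hvu]
  rw [show ({u, w, v} : Finset (Fin n)) = {u, v, w} by ext x; simp; tauto,
    Finset.card_insert_of_notMem (by simp; tauto),
    Finset.card_insert_of_notMem (by simp; tauto)]
  simp

/-- For vertex-disjoint loose cycles on `nl 1, …, nl r` vertices (each `nl i` even and
at least 6, summing to `n`), with `k` of them of odd length, there is a 3-graph `H` on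
`n` vertices whose minimum codegree equals `⌊(n+2k)/4⌋ - 1` which does not contain the
disjoint union of these loose cycles as a spanning subhypergraph. -/
theorem stmt_5 (n r : ℕ) (hr : 1 ≤ r) (nl : Fin r → ℕ)
    (hev : ∀ i, Even (nl i)) (hl : ∀ i, 6 ≤ nl i) (hsum : ∑ i, nl i = n)
    (k : ℕ) (hk : k = (Finset.univ.filter fun i => Odd (nl i / 2)).card) :
    ∃ E : Finset (Finset (Fin n)),
      (∀ e ∈ E, e.card = 3) ∧
      (∀ u v : Fin n, u ≠ v →
        (n + 2 * k) / 4 - 1 ≤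
          (Finset.univ.filter fun w => ({u, v, w} : Finset (Fin n)) ∈ E).card) ∧
      (∃ u v : Fin n, u ≠ v ∧
        (Finset.univ.filter fun w => ({u, v, w} : Finset (Fin n)) ∈ E).card =
          (n + 2 * k) / 4 - 1) ∧
      ¬ ∃ f : (Σ i : Fin r, ZMod (nl i)) → Fin n, Function.Injective f ∧
        ∀ (i : Fin r), ∀ j < nl i / 2,
          ({f ⟨i, ((2 * j : ℕ) : ZMod (nl i))⟩,
            f ⟨i, ((2 * j + 1 : ℕ) : ZMod (nl i))⟩,
            f ⟨i, ((2 * j + 2 : ℕ) : ZMod (nl i))⟩} : Finset (Fin n)) ∈ E := by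
  classical
  -- basic numeric facts
  have hnl2 : ∀ i, nl i = 2 * (nl i / 2) := by
    intro i; obtain ⟨t, ht⟩ := hev i; omega
  have hsum2 : 2 * ∑ i, nl i / 2 = n := by
    rw [← hsum, Finset.mul_sum]
    exact Finset.sum_congr rfl fun i _ => (hnl2 i).symm
  have hkr : k ≤ r := by
    rw [hk]
    calc (Finset.univ.filter fun i => Odd (nl i / 2)).card
        ≤ (Finset.univ : Finset (Fin r)).card := Finset.card_filter_le _ _
      _ = r := by simp
  have h6r : 6 * r ≤ n := by
    rw [← hsum]
    calc 6 * r = ∑ _i : Fin r, 6 := by simp [mul_comm]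
      _ ≤ ∑ i, nl i := Finset.sum_le_sum fun i _ => hl i
  -- the key divisibility : n + 2k = 4q
  have heven : 2 ∣ (∑ i, nl i / 2) + k := by
    rw [hk, Finset.card_filter, ← Finset.sum_add_distrib]
    apply Finset.dvd_sum
    intro i _
    by_cases h : Odd (nl i / 2)
    · simp only [if_pos h]
      obtain ⟨t, ht⟩ := h; omega
    · simp only [if_neg h]
      rw [Nat.not_odd_iff_even] at h
      obtain ⟨t, ht⟩ := h; omega
  obtain ⟨q, hq⟩ := heven
  have hnk : n + 2 * k = 4 * q := by omega
  set m : ℕ := (n + 2 * k) / 4 - 1 with hm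
  have hmq : m = q - 1 := by omega
  have hq2 : 2 ≤ q := by
    have h3r : 3 * r ≤ ∑ i, nl i / 2 := by
      calc 3 * r = ∑ _i : Fin r, 3 := by simp [mul_comm]
        _ ≤ ∑ i, nl i / 2 := Finset.sum_le_sum fun i _ => by have := hl i; omega
    omega
  have hmn2 : m + 2 ≤ n := by omega
  have hmn : m < n := by omega
  -- the construction: edges are all triples meeting `A = {v : v < m}`
  set A : Finset (Fin n) := Finset.univ.filter (fun v : Fin n => (v : ℕ) < m) with hA
  have hAcard : A.card = m := by
    have : A = Finset.Iio (⟨m, hmn⟩ : Fin n) := by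
      ext v; simp [hA, Fin.lt_def]
    rw [this, Fin.card_Iio]
  set E : Finset (Finset (Fin n)) :=
    Finset.univ.filter (fun e : Finset (Fin n) => e.card = 3 ∧ ∃ a ∈ e, (a : ℕ) < m)
    with hE
  have hmemE : ∀ s : Finset (Fin n), s ∈ E ↔ s.card = 3 ∧ ∃ a ∈ s, (a : ℕ) < m := by
    intro s; simp [hE]
  have hc3 : ∀ u v w : Fin n, u ≠ v →
      (({u, v, w} : Finset (Fin n)).card = 3 ↔ w ≠ u ∧ w ≠ v) :=
    fun u v w huv => triple_card_eq_three u v w huv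
  refine ⟨E, ?_, ?_, ?_, ?_⟩
  · intro e he; exact ((hmemE e).mp he).1
  -- minimum codegree lower bound
  · intro u v huv
    by_cases hAu : (u : ℕ) < m ∨ (v : ℕ) < m
    · have hsub : Finset.univ \ {u, v} ⊆
          Finset.univ.filter (fun w => ({u, v, w} : Finset (Fin n)) ∈ E) := by
        intro w hw
        rw [Finset.mem_sdiff, Finset.mem_insert, Finset.mem_singleton] at hw
        obtain ⟨-, hw⟩ := hw
        push_neg at hw
        rw [Finset.mem_filter]
        refine ⟨Finset.mem_univ _, (hmemE _).mpr ⟨(hc3 u v w huv).mpr ⟨hw.1, hw.2⟩, ?_⟩⟩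
        rcases hAu with h | h
        · exact ⟨u, by simp, h⟩
        · exact ⟨v, by simp, h⟩
      have hcard : (Finset.univ \ ({u, v} : Finset (Fin n))).card = n - 2 := by
        rw [Finset.card_sdiff_of_subset (Finset.subset_univ _), Finset.card_univ,
          Fintype.card_fin, Finset.card_pair huv]
      have hle := Finset.card_le_card hsub
      omega
    · push_neg at hAu
      have hsub : A ⊆
          Finset.univ.filter (fun w => ({u, v, w} : Finset (Fin n)) ∈ E) := by
        intro w hw
        rw [hA, Finset.mem_filter] at hw
        obtain ⟨-, hwm⟩ := hw
        have hwu : w ≠ u := by rintro rfl; omega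
        have hwv : w ≠ v := by rintro rfl; omega
        rw [Finset.mem_filter]
        exact ⟨Finset.mem_univ _,
          (hmemE _).mpr ⟨(hc3 u v w huv).mpr ⟨hwu, hwv⟩, ⟨w, by simp, hwm⟩⟩⟩
      calc (n + 2 * k) / 4 - 1 = A.card := hAcard.symm
        _ ≤ _ := Finset.card_le_card hsub
  -- a pair attaining the bound
  · refine ⟨⟨n - 1, by omega⟩, ⟨n - 2, by omega⟩, by simp [Fin.ext_iff]; omega, ?_⟩
    set u : Fin n := ⟨n - 1, by omega⟩ with hu
    set v : Fin n := ⟨n - 2, by omega⟩ with hv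
    have huval : (u : ℕ) = n - 1 := rfl
    have hvval : (v : ℕ) = n - 2 := rfl
    have huv : u ≠ v := by
      intro h
      have : (u : ℕ) = (v : ℕ) := by rw [h]
      omega
    have hset : Finset.univ.filter (fun w => ({u, v, w} : Finset (Fin n)) ∈ E) = A := by
      ext w
      rw [Finset.mem_filter, hmemE, hA, Finset.mem_filter]
      simp only [Finset.mem_univ, true_and]
      constructor
      · rintro ⟨h3, a, ha, ham⟩
        simp only [Finset.mem_insert, Finset.mem_singleton] at ha
        rcases ha with rfl | rfl | rfl
        · omega
        · omega
        · exact ham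
      · intro hwm
        have hwu : w ≠ u := by
          intro h; rw [h, huval] at hwm; omega
        have hwv : w ≠ v := by
          intro h; rw [h, hvval] at hwm; omega
        exact ⟨(hc3 u v w huv).mpr ⟨hwu, hwv⟩, ⟨w, by simp, hwm⟩⟩
    rw [hset, hAcard]
  -- non-containment via the vertex-cover argument
  · rintro ⟨f, hfinj, hfedge⟩
    haveI : ∀ i, NeZero (nl i) := fun i => ⟨by have := hl i; omega⟩
    have hcover : ∀ i, nl i / 2 ≤
        2 * (Finset.univ.filter
          (fun v : ZMod (nl i) => ((f ⟨i, v⟩ : Fin n) : ℕ) < m)).card := by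
      intro i
      apply loose_cycle_cover n (nl i) (nl i / 2) m (hnl2 i) (by have := hl i; omega)
        (fun v => f ⟨i, v⟩)
      intro j hj
      have hje := hfedge i j hj
      rw [hmemE] at hje
      obtain ⟨-, a, ha, ham⟩ := hje
      simp only [Finset.mem_insert, Finset.mem_singleton] at ha
      rcases ha with rfl | rfl | rfl
      · exact ⟨((2 * j : ℕ) : ZMod (nl i)), Or.inl rfl, ham⟩
      · exact ⟨_, Or.inr (Or.inl rfl), ham⟩
      · exact ⟨_, Or.inr (Or.inr rfl), ham⟩
    have hsumA : ∑ i, (Finset.univ.filter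
        (fun v : ZMod (nl i) => ((f ⟨i, v⟩ : Fin n) : ℕ) < m)).card ≤ m := by
      have hstep : ((Finset.univ : Finset (Fin r)).sigma fun i =>
          Finset.univ.filter
            (fun v : ZMod (nl i) => ((f ⟨i, v⟩ : Fin n) : ℕ) < m)).card ≤ A.card := by
        apply Finset.card_le_card_of_injOn (fun p => f p)
        · intro p hp
          rw [Finset.mem_coe, Finset.mem_sigma] at hp
          have h2 := hp.2
          rw [Finset.mem_filter] at h2
          rw [hA, Finset.mem_coe, Finset.mem_filter]
          exact ⟨Finset.mem_univ _, h2.2⟩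
        · exact hfinj.injOn
      rw [Finset.card_sigma] at hstep
      omega
    have hfinal : (∑ i, nl i / 2) + k ≤ 2 * m := by
      rw [hk, Finset.card_filter, ← Finset.sum_add_distrib]
      calc ∑ i, (nl i / 2 + if Odd (nl i / 2) then 1 else 0)
          ≤ ∑ i, 2 * (Finset.univ.filter
            (fun v : ZMod (nl i) => ((f ⟨i, v⟩ : Fin n) : ℕ) < m)).card := by
            apply Finset.sum_le_sum
            intro i _
            by_cases h : Odd (nl i / 2)
            · rw [if_pos h]
              obtain ⟨t, ht⟩ := h
              have := hcover i
              omega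
            · rw [if_neg h]
              exact hcover i
        _ = 2 * ∑ i, (Finset.univ.filter
            (fun v : ZMod (nl i) => ((f ⟨i, v⟩ : Fin n) : ℕ) < m)).card := by
            rw [Finset.mul_sum]
        _ ≤ 2 * m := by omega
    omega
end
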